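/- arXiv:2306.03684 — 4 statements merged into one kernel-verified Lean document; each statement's English description precedes it below -/
import Mathlib

section
/- Let (X, Σ) be a measurable space, B a separable Banach space, and C : X ⇉ B a multivalued mapping with C(x) closed and nonempty for every x. Then C is weakly measurable (i.e. {x : C(x) ∩ U ≠ ∅} ∈ Σ for every open U ⊆ B) if and only if there exists a sequence (v_n) of measurable maps v_n : X → B such that C(x) is the closure of {v_n(x) : n ∈ ℕ} for every x ∈ X. -/
/-!
Kuratowski–Ryll-Nardzewski: along a dense sequence `dₙ` one chooses, measurably in `x` (first
admissible index), points `d_{g_k(x)}` within `2⁻ᵏ` of `C x` and within `2 · 2⁻ᵏ` of the previous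
choice; their limit is a measurable selection. Applying this to the closed-valued maps
`x ↦ closure (C x ∩ V)` (or `C x` when this is empty), for `V` in a countable basis, yields countably
many selections that are dense in every `C x`. Conversely, `C x` meets an open `U` iff some
`vₙ x` lies in `U`.
-/

open TopologicalSpace Metric Filter Set Topology

def WeaklyMeasurable {X B : Type*} [MeasurableSpace X] [TopologicalSpace B] (C : X → Set B) :
    Prop :=
  ∀ U : Set B, IsOpen U → MeasurableSet {x | (C x ∩ U).Nonempty}

section

variable {X B : Type*} [MeasurableSpace X] {C : X → Set B}

theorem weaklyMeasurable_of_eq_closure_range [TopologicalSpace B] [MeasurableSpace B]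
    [OpensMeasurableSpace B] {ι : Type*} [Countable ι] {v : ι → X → B}
    (hv : ∀ i, Measurable (v i)) (hC : ∀ x, C x = closure (range fun i => v i x)) :
    WeaklyMeasurable C := by
  intro U hU
  have hpre : {x | (C x ∩ U).Nonempty} = ⋃ i, v i ⁻¹' U := by
    ext x
    change (C x ∩ U).Nonempty ↔ x ∈ ⋃ i, v i ⁻¹' U
    rw [hC x, closure_inter_open_nonempty_iff hU]
    simp [Set.Nonempty]
  rw [hpre]
  exact MeasurableSet.iUnion fun i => hU.measurableSet.preimage (hv i)

open Classical in
theorem WeaklyMeasurable.ite_closure_inter [TopologicalSpace B] (hC : WeaklyMeasurable C)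
    {V : Set B} (hV : IsOpen V) :
    WeaklyMeasurable fun x => if (C x ∩ V).Nonempty then closure (C x ∩ V) else C x := by
  intro U hU
  have hite : {x | ((if (C x ∩ V).Nonempty then closure (C x ∩ V) else C x) ∩ U).Nonempty} =
      Set.ite {x | (C x ∩ V).Nonempty} {x | (C x ∩ (V ∩ U)).Nonempty}
        {x | (C x ∩ U).Nonempty} := by
    ext x
    by_cases hx : (C x ∩ V).Nonempty <;>
      simp [Set.ite, hx, closure_inter_open_nonempty_iff hU, inter_assoc]
  rw [hite]
  exact (hC V hV).ite (hC _ (hV.inter hU)) (hC U hU)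

theorem eq_closure_range_of_isTopologicalBasis [TopologicalSpace B] [RegularSpace B] {S : Set B}
    (hS : IsClosed S) {𝓑 : Set (Set B)} (h𝓑 : IsTopologicalBasis 𝓑) {s : 𝓑 → B}
    (hsS : ∀ V, s V ∈ S) (hsV : ∀ V : 𝓑, (S ∩ V).Nonempty → s V ∈ closure V) :
    S = closure (range s) := by
  refine (closure_minimal (range_subset_iff.2 hsS) hS).antisymm' fun y hy => ?_
  refine mem_closure_iff_nhds.2 fun t ht => ?_
  obtain ⟨V, hV, hyV, hVt⟩ := h𝓑.exists_closure_subset ht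
  exact ⟨s ⟨V, hV⟩, hVt (hsV ⟨V, hV⟩ ⟨y, hy, hyV⟩), mem_range_self _⟩

theorem exists_measurable_nat_of_forall_exists {p : X → ℕ → Prop}
    (hp : ∀ n, MeasurableSet {x | p x n}) (h : ∀ x, ∃ n, p x n) :
    ∃ g : X → ℕ, Measurable g ∧ ∀ x, p x (g x) := by
  classical
  exact ⟨fun x => Nat.find (h x), measurable_find h hp, fun x => Nat.find_spec (h x)⟩

section PseudoMetric

variable [PseudoMetricSpace B]

theorem WeaklyMeasurable.measurable_infDist (hC : WeaklyMeasurable C)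
    (hne : ∀ x, (C x).Nonempty) (b : B) : Measurable fun x => infDist b (C x) := by
  refine measurable_of_Iio fun r => ?_
  have hpre : (fun x => infDist b (C x)) ⁻¹' Iio r = {x | (C x ∩ ball b r).Nonempty} := by
    ext x
    simp [infDist_lt_iff (hne x), Set.Nonempty, dist_comm]
  rw [hpre]
  exact hC _ isOpen_ball

theorem WeaklyMeasurable.exists_measurable_index_infDist_lt (hC : WeaklyMeasurable C)
    (hne : ∀ x, (C x).Nonempty) {d : ℕ → B} (hd : DenseRange d) {r : ℝ} (hr : 0 < r) :
    ∃ g : X → ℕ, Measurable g ∧ ∀ x, infDist (d (g x)) (C x) < r := by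
  refine exists_measurable_nat_of_forall_exists
    (fun n => measurableSet_lt (hC.measurable_infDist hne (d n)) measurable_const) fun x => ?_
  obtain ⟨c, hc⟩ := hne x
  obtain ⟨n, hn⟩ := hd.exists_dist_lt c hr
  exact ⟨n, (infDist_le_dist_of_mem hc).trans_lt (by rwa [dist_comm])⟩

theorem WeaklyMeasurable.exists_measurable_index_refine (hC : WeaklyMeasurable C)
    (hne : ∀ x, (C x).Nonempty) {d : ℕ → B} (hd : DenseRange d) {g : X → ℕ}
    (hg : Measurable g) {r : ℝ} (hr : 0 < r) (hgC : ∀ x, infDist (d (g x)) (C x) < r) :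
    ∃ g' : X → ℕ, Measurable g' ∧
      ∀ x, infDist (d (g' x)) (C x) < r / 2 ∧ dist (d (g' x)) (d (g x)) < 2 * r := by
  refine exists_measurable_nat_of_forall_exists
    (p := fun x n => infDist (d n) (C x) < r / 2 ∧ dist (d n) (d (g x)) < 2 * r) (fun n =>
    (measurableSet_lt (hC.measurable_infDist hne (d n)) measurable_const).inter
      (hg (t := {m | dist (d n) (d m) < 2 * r}) .of_discrete)) fun x => ?_
  obtain ⟨c, hc, hgc⟩ := (infDist_lt_iff (hne x)).1 (hgC x)
  obtain ⟨n, hcn⟩ := hd.exists_dist_lt c (half_pos hr)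
  refine ⟨n, (infDist_le_dist_of_mem hc).trans_lt (by rwa [dist_comm]), ?_⟩
  calc dist (d n) (d (g x)) ≤ dist (d n) c + dist c (d (g x)) := dist_triangle _ _ _
    _ < r / 2 + r := by rw [dist_comm (d n) c, dist_comm c (d (g x))]; exact add_lt_add hcn hgc
    _ < 2 * r := by linarith

variable [MeasurableSpace B] [BorelSpace B]

theorem exists_measurable_mem_of_tendsto_infDist [CompleteSpace B]
    (hcl : ∀ x, IsClosed (C x)) (hne : ∀ x, (C x).Nonempty) {u : ℕ → X → B}
    (hu : ∀ k, Measurable (u k)) (hcauchy : ∀ x, CauchySeq fun k => u k x)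
    (hlim : ∀ x, Tendsto (fun k => infDist (u k x) (C x)) atTop (𝓝 0)) :
    ∃ f : X → B, Measurable f ∧ ∀ x, f x ∈ C x := by
  choose f hf using fun x => cauchySeq_tendsto_of_complete (hcauchy x)
  refine ⟨f, measurable_of_tendsto_metrizable hu (tendsto_pi_nhds.2 hf), fun x => ?_⟩
  have hlim' : Tendsto (fun k => infDist (u k x) (C x)) atTop (𝓝 (infDist (f x) (C x))) :=
    ((continuous_infDist_pt (C x)).tendsto _).comp (hf x)
  exact ((hcl x).mem_iff_infDist_zero (hne x)).2 (tendsto_nhds_unique hlim' (hlim x))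

variable [CompleteSpace B] [SeparableSpace B] [Nonempty B]

theorem WeaklyMeasurable.exists_measurable_selection (hC : WeaklyMeasurable C)
    (hcl : ∀ x, IsClosed (C x)) (hne : ∀ x, (C x).Nonempty) :
    ∃ f : X → B, Measurable f ∧ ∀ x, f x ∈ C x := by
  set d := denseSeq B
  have hd : DenseRange d := denseRange_denseSeq B
  obtain ⟨g₀, hg₀, hg₀C⟩ := hC.exists_measurable_index_infDist_lt hne hd one_pos
  choose! next hnext_meas hnext using fun (k : ℕ) (g : X → ℕ) (hg : Measurable g)
    (hgC : ∀ x, infDist (d (g x)) (C x) < (1 / 2) ^ k) =>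
      hC.exists_measurable_index_refine hne hd hg (by positivity) hgC
  let g : ℕ → X → ℕ := fun k => Nat.rec g₀ next k
  have hg : ∀ k, Measurable (g k) ∧ ∀ x, infDist (d (g k x)) (C x) < (1 / 2) ^ k := by
    intro k
    induction k with
    | zero => simpa using ⟨hg₀, hg₀C⟩
    | succ k ih =>
      refine ⟨hnext_meas k _ ih.1 ih.2, fun x => ?_⟩
      rw [pow_succ, ← div_eq_mul_one_div]
      exact (hnext k _ ih.1 ih.2 x).1
  refine exists_measurable_mem_of_tendsto_infDist hcl hne (u := fun k x => d (g k x))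
    (fun k => measurable_from_top.comp (hg k).1) (fun x => ?_) (fun x => ?_)
  · refine cauchySeq_of_le_geometric (1 / 2) 2 (by norm_num) fun k => ?_
    rw [dist_comm]
    exact (hnext k _ (hg k).1 (hg k).2 x).2.le
  · exact squeeze_zero (fun _ => infDist_nonneg) (fun k => ((hg k).2 x).le)
      (tendsto_pow_atTop_nhds_zero_of_lt_one (by norm_num) (by norm_num))

theorem WeaklyMeasurable.exists_measurable_selection_near (hC : WeaklyMeasurable C)
    (hcl : ∀ x, IsClosed (C x)) (hne : ∀ x, (C x).Nonempty) {V : Set B} (hV : IsOpen V) :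
    ∃ f : X → B, Measurable f ∧ ∀ x, f x ∈ C x ∧ ((C x ∩ V).Nonempty → f x ∈ closure V) := by
  obtain ⟨f, hf, hfE⟩ := (hC.ite_closure_inter hV).exists_measurable_selection
    (fun x => by split_ifs; exacts [isClosed_closure, hcl x])
    (fun x => by split_ifs with h; exacts [h.closure, hne x])
  refine ⟨f, hf, fun x => ?_⟩
  have hfx := hfE x
  by_cases hx : (C x ∩ V).Nonempty
  · rw [if_pos hx] at hfx
    exact ⟨closure_minimal inter_subset_left (hcl x) hfx,
      fun _ => closure_mono inter_subset_right hfx⟩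
  · rw [if_neg hx] at hfx
    exact ⟨hfx, fun h => absurd h hx⟩

theorem WeaklyMeasurable.exists_castaing (hC : WeaklyMeasurable C)
    (hcl : ∀ x, IsClosed (C x)) (hne : ∀ x, (C x).Nonempty) :
    ∃ v : ℕ → X → B, (∀ n, Measurable (v n)) ∧ ∀ x, C x = closure (range fun n => v n x) := by
  choose f hfm hfC hfV using fun V : countableBasis B =>
    hC.exists_measurable_selection_near hcl hne (isOpen_of_mem_countableBasis V.2)
  have : Countable (countableBasis B) := (countable_countableBasis B).to_subtype
  have : Nonempty (countableBasis B) := by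
    obtain ⟨V, hV, -⟩ := mem_sUnion.1 ((isBasis_countableBasis B).sUnion_eq.symm ▸
      mem_univ (Classical.arbitrary B))
    exact ⟨⟨V, hV⟩⟩
  obtain ⟨e, he⟩ := exists_surjective_nat (countableBasis B)
  refine ⟨fun n => f (e n), fun n => hfm (e n), fun x => ?_⟩
  change C x = closure (range ((fun V => f V x) ∘ e))
  rw [he.range_comp]
  exact eq_closure_range_of_isTopologicalBasis (hcl x) (isBasis_countableBasis B)
    (fun V => hfC V x) (fun V => hfV V x)

end PseudoMetric

end

theorem weakly_measurable_iff_castaing_general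
    {X : Type*} [MeasurableSpace X]
    {B : Type*} [NormedAddCommGroup B] [CompleteSpace B]
    [SeparableSpace B] [MeasurableSpace B] [BorelSpace B]
    (C : X → Set B) (hcl : ∀ x, IsClosed (C x)) (hne : ∀ x, (C x).Nonempty) :
    (∀ U : Set B, IsOpen U → MeasurableSet {x | (C x ∩ U).Nonempty}) ↔
      ∃ v : ℕ → X → B, (∀ n, Measurable (v n)) ∧
        ∀ x, C x = closure (Set.range fun n => v n x) :=
  ⟨fun hC => WeaklyMeasurable.exists_castaing hC hcl hne,
    fun ⟨_, hv, hCv⟩ => weaklyMeasurable_of_eq_closure_range hv hCv⟩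

/-- **Castaing representation.** Let `(X, Σ)` be a measurable space, `B` a
separable Banach space, and `C : X ⇉ B` a multivalued map with closed nonempty values.
Then `C` is weakly measurable iff there is a sequence of measurable selections `v_n` with
`C(x) = cl{v_n(x) : n ∈ ℕ}` for every `x`. -/
theorem weakly_measurable_iff_castaing
    {X : Type*} [MeasurableSpace X]
    {B : Type*} [NormedAddCommGroup B] [NormedSpace ℝ B] [CompleteSpace B]
    [SeparableSpace B] [MeasurableSpace B] [BorelSpace B]
    (C : X → Set B) (hcl : ∀ x, IsClosed (C x)) (hne : ∀ x, (C x).Nonempty) :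
    (∀ U : Set B, IsOpen U → MeasurableSet {x | (C x ∩ U).Nonempty}) ↔
      ∃ v : ℕ → X → B, (∀ n, Measurable (v n)) ∧
        ∀ x, C x = closure (Set.range fun n => v n x) :=
  weakly_measurable_iff_castaing_general C hcl hne
end

section
/- Let (X, Σ) be a measurable space, B a separable Banach space, and S : X ⇉ B a weakly measurable multivalued mapping with S(x) closed and nonempty for every x. Define V(x) as the closed linear span of S(x). Then V : X ⇉ B is weakly measurable, and V(x) is a closed vector subspace of B for every x. -/
open TopologicalSpace Pointwise Filter Topology

section Aux

variable {X : Type*} [MeasurableSpace X]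
    {B : Type*} [NormedAddCommGroup B] [NormedSpace ℝ B]
    [SeparableSpace B]

/-- rational multiples of elements of `S x` -/
def ratMulSet (S : X → Set B) (x : X) : Set B :=
  {b | ∃ q : ℚ, ∃ s ∈ S x, b = (q : ℝ) • s}

/-- iterated Minkowski sums -/
def iterSum (R : X → Set B) : ℕ → X → Set B
  | 0 => fun _ => ({0} : Set B)
  | (n + 1) => fun x => iterSum R n x + R x

lemma wm_add (C D : X → Set B)
    (hC : ∀ U : Set B, IsOpen U → MeasurableSet {x | (C x ∩ U).Nonempty})
    (hD : ∀ U : Set B, IsOpen U → MeasurableSet {x | (D x ∩ U).Nonempty}) :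
    ∀ U : Set B, IsOpen U → MeasurableSet {x | ((C x + D x) ∩ U).Nonempty} := by
  haveI : SecondCountableTopology B := UniformSpace.secondCountable_of_separable B
  intro U hU
  obtain ⟨b, hbc, -, hbb⟩ := exists_countable_basis B
  set W : Set (B × B) := (fun p : B × B => p.1 + p.2) ⁻¹' U with hW
  have hWopen : IsOpen W := hU.preimage (continuous_fst.add continuous_snd)
  set P : Set (Set B × Set B) := {p | p.1 ∈ b ∧ p.2 ∈ b ∧ p.1 ×ˢ p.2 ⊆ W} with hP
  have hPc : P.Countable := ((hbc.prod hbc).mono (by intro p hp; exact ⟨hp.1, hp.2.1⟩))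
  have key : {x | ((C x + D x) ∩ U).Nonempty} =
      ⋃ p ∈ P, ({x | (C x ∩ p.1).Nonempty} ∩ {x | (D x ∩ p.2).Nonempty}) := by
    ext x
    simp only [Set.mem_iUnion, Set.mem_setOf_eq, Set.mem_inter_iff]
    constructor
    · rintro ⟨z, ⟨c, hc, d, hd, rfl⟩, hzU⟩
      have hcd : (c, d) ∈ W := hzU
      obtain ⟨v, hvB, hvmem, hvW⟩ :=
        (hbb.prod hbb).exists_subset_of_mem_open hcd hWopen
      obtain ⟨u1, hu1, u2, hu2, rfl⟩ := hvB
      exact ⟨(u1, u2), ⟨hu1, hu2, hvW⟩, ⟨c, hc, hvmem.1⟩, ⟨d, hd, hvmem.2⟩⟩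
    · rintro ⟨p, hpP, ⟨c, hcC, hcp⟩, ⟨d, hdD, hdp⟩⟩
      refine ⟨c + d, Set.add_mem_add hcC hdD, ?_⟩
      exact hpP.2.2 (Set.mk_mem_prod hcp hdp)
  rw [key]
  exact MeasurableSet.biUnion hPc fun p hp => (hC _ (hbb.isOpen hp.1)).inter (hD _ (hbb.isOpen hp.2.1))

lemma wm_ratMul (S : X → Set B)
    (hmeas : ∀ U : Set B, IsOpen U → MeasurableSet {x | (S x ∩ U).Nonempty}) :
    ∀ U : Set B, IsOpen U → MeasurableSet {x | (ratMulSet S x ∩ U).Nonempty} := by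
  intro U hU
  have key : {x | (ratMulSet S x ∩ U).Nonempty} =
      ⋃ q : ℚ, {x | (S x ∩ ((fun s : B => (q : ℝ) • s) ⁻¹' U)).Nonempty} := by
    ext x
    simp only [Set.mem_iUnion, Set.mem_setOf_eq]
    constructor
    · rintro ⟨z, ⟨q, s, hs, rfl⟩, hzU⟩
      exact ⟨q, s, hs, hzU⟩
    · rintro ⟨q, s, hs, hsU⟩
      exact ⟨(q : ℝ) • s, ⟨q, s, hs, rfl⟩, hsU⟩
  rw [key]
  exact MeasurableSet.iUnion fun q =>
    hmeas _ (hU.preimage (continuous_const_smul ((q : ℝ))))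

lemma wm_iterSum (R : X → Set B)
    (hR : ∀ U : Set B, IsOpen U → MeasurableSet {x | (R x ∩ U).Nonempty}) (n : ℕ) :
    ∀ U : Set B, IsOpen U → MeasurableSet {x | (iterSum R n x ∩ U).Nonempty} := by
  induction n with
  | zero =>
    intro U hU
    by_cases h : (0 : B) ∈ U
    · have : {x : X | (iterSum R 0 x ∩ U).Nonempty} = Set.univ := by
        ext x; simp [iterSum, h]
      rw [this]; exact MeasurableSet.univ
    · have : {x : X | (iterSum R 0 x ∩ U).Nonempty} = ∅ := by
        ext x; simp [iterSum, h]
      rw [this]; exact MeasurableSet.empty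
  | succ n ih =>
    exact wm_add (iterSum R n) R ih hR

lemma iterSum_subset_span (S : X → Set B) (x : X) (n : ℕ) :
    iterSum (ratMulSet S) n x ⊆ (Submodule.span ℝ (S x) : Set B) := by
  induction n with
  | zero =>
    rintro z hz
    simp only [iterSum, Set.mem_singleton_iff] at hz
    subst hz; exact (Submodule.span ℝ (S x)).zero_mem
  | succ n ih =>
    rintro z ⟨a, ha, c, ⟨q, s, hs, rfl⟩, rfl⟩
    exact (Submodule.span ℝ (S x)).add_mem (ih ha)
      ((Submodule.span ℝ (S x)).smul_mem _ (Submodule.subset_span hs))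

lemma rat_smul_iterSum (S : X → Set B) (x : X) (q : ℚ) {n : ℕ} {a : B}
    (ha : a ∈ iterSum (ratMulSet S) n x) : (q : ℝ) • a ∈ iterSum (ratMulSet S) n x := by
  induction n generalizing a with
  | zero =>
    simp only [iterSum, Set.mem_singleton_iff] at ha ⊢
    subst ha; simp
  | succ n ih =>
    obtain ⟨c, hc, d, ⟨q', s, hs, rfl⟩, rfl⟩ := ha
    refine ⟨(q : ℝ) • c, ih hc, ((q * q' : ℚ) : ℝ) • s, ⟨q * q', s, hs, rfl⟩, ?_⟩
    rw [smul_add, smul_smul]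
    norm_cast

lemma iterSum_add_mem (R : X → Set B) (x : X) {m k : ℕ} {a c : B}
    (ha : a ∈ iterSum R m x) (hc : c ∈ iterSum R k x) :
    a + c ∈ iterSum R (m + k) x := by
  induction k generalizing c with
  | zero =>
    simp only [iterSum, Set.mem_singleton_iff] at hc
    subst hc; simpa using ha
  | succ k ih =>
    obtain ⟨c', hc', d', hd', rfl⟩ := hc
    exact ⟨a + c', ih hc', d', hd', by show a + c' + d' = a + (c' + d'); rw [add_assoc]⟩

/-- a sequence of rationals converging to a real -/
lemma exists_rat_seq (r : ℝ) :
    ∃ q : ℕ → ℚ, Tendsto (fun n => ((q n : ℝ))) atTop (nhds r) := by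
  have h : ∀ n : ℕ, ∃ q : ℚ, |r - (q : ℝ)| < 1 / (n + 1) := fun n =>
    exists_rat_near r (by positivity)
  choose q hq using h
  refine ⟨q, ?_⟩
  rw [tendsto_iff_dist_tendsto_zero]
  apply squeeze_zero (fun n => dist_nonneg) (fun n => ?_)
    tendsto_one_div_add_atTop_nhds_zero_nat
  rw [Real.dist_eq, abs_sub_comm]
  exact (hq n).le

lemma span_subset_closure_union (S : X → Set B) (x : X) :
    (Submodule.span ℝ (S x) : Set B) ⊆ closure (⋃ n, iterSum (ratMulSet S) n x) := by
  set D : Set B := ⋃ n, iterSum (ratMulSet S) n x with hD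
  have hmem : ∀ n, ∀ a ∈ iterSum (ratMulSet S) n x, a ∈ D := fun n a ha =>
    Set.mem_iUnion.2 ⟨n, ha⟩
  intro z hz
  induction hz using Submodule.span_induction with
  | mem s hs =>
    refine subset_closure (hmem 1 _ ⟨0, rfl, s, ⟨1, s, hs, by norm_num⟩, (zero_add _)⟩)
  | zero => exact subset_closure (hmem 0 _ rfl)
  | add a c ha hc iha ihc =>
    -- closure D is closed under addition since D is
    rw [mem_closure_iff_seq_limit] at iha ihc ⊢
    obtain ⟨u, hu, hul⟩ := iha
    obtain ⟨v, hv, hvl⟩ := ihc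
    refine ⟨fun n => u n + v n, fun n => ?_, hul.add hvl⟩
    obtain ⟨m, hm⟩ := Set.mem_iUnion.1 (hu n)
    obtain ⟨k, hk⟩ := Set.mem_iUnion.1 (hv n)
    exact hmem (m + k) _ (iterSum_add_mem _ x hm hk)
  | smul r a ha iha =>
    rw [mem_closure_iff_seq_limit] at iha ⊢
    obtain ⟨u, hu, hul⟩ := iha
    obtain ⟨q, hq⟩ := exists_rat_seq r
    refine ⟨fun n => ((q n : ℝ)) • u n, fun n => ?_, hq.smul hul⟩
    obtain ⟨m, hm⟩ := Set.mem_iUnion.1 (hu n)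
    exact hmem m _ (rat_smul_iterSum S x (q n) hm)

end Aux

/-- If `S : X ⇉ B` is a weakly measurable multivalued map with closed
nonempty values into a separable Banach space, then `V(x) := cl(span(S(x)))` defines a
weakly measurable multivalued map whose values are closed vector subspaces of `B`. -/
theorem closed_span_weakly_measurable
    {X : Type*} [MeasurableSpace X]
    {B : Type*} [NormedAddCommGroup B] [NormedSpace ℝ B] [CompleteSpace B]
    [SeparableSpace B] [MeasurableSpace B] [BorelSpace B]
    (S : X → Set B) (hcl : ∀ x, IsClosed (S x)) (hne : ∀ x, (S x).Nonempty)
    (hmeas : ∀ U : Set B, IsOpen U → MeasurableSet {x | (S x ∩ U).Nonempty}) :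
    (∀ U : Set B, IsOpen U →
      MeasurableSet {x | (closure (Submodule.span ℝ (S x) : Set B) ∩ U).Nonempty}) ∧
    ∀ x, IsClosed (closure (Submodule.span ℝ (S x) : Set B)) ∧
      ∃ V : Submodule ℝ B, (V : Set B) = closure (Submodule.span ℝ (S x) : Set B) := by
  constructor
  · intro U hU
    have hclos : ∀ x, closure (Submodule.span ℝ (S x) : Set B) =
        closure (⋃ n, iterSum (ratMulSet S) n x) := by
      intro x
      apply subset_antisymm
      · exact closure_minimal (span_subset_closure_union S x) isClosed_closure
      · exact closure_mono (Set.iUnion_subset fun n => iterSum_subset_span S x n)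
    have hopen_inter : ∀ (s : Set B), ((closure s ∩ U).Nonempty ↔ (s ∩ U).Nonempty) := by
      intro s
      constructor
      · rintro ⟨z, hzc, hzU⟩
        have : z ∈ closure (U ∩ s) := hU.inter_closure ⟨hzU, hzc⟩
        obtain ⟨w, hw⟩ := (mem_closure_iff.1 this) U hU hzU
        exact ⟨w, hw.2.2, hw.2.1⟩
      · rintro ⟨z, hzs, hzU⟩
        exact ⟨z, subset_closure hzs, hzU⟩
    have key : {x | (closure (Submodule.span ℝ (S x) : Set B) ∩ U).Nonempty} =
        ⋃ n, {x | (iterSum (ratMulSet S) n x ∩ U).Nonempty} := by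
      ext x
      simp only [Set.mem_setOf_eq, Set.mem_iUnion]
      rw [hclos x, hopen_inter]
      constructor
      · rintro ⟨z, hz, hzU⟩
        obtain ⟨n, hn⟩ := Set.mem_iUnion.1 hz
        exact ⟨n, z, hn, hzU⟩
      · rintro ⟨n, z, hz, hzU⟩
        exact ⟨z, Set.mem_iUnion.2 ⟨n, hz⟩, hzU⟩
    rw [key]
    exact MeasurableSet.iUnion fun n =>
      wm_iterSum (ratMulSet S) (wm_ratMul S hmeas) n U hU
  · intro x
    refine ⟨isClosed_closure, (Submodule.span ℝ (S x)).topologicalClosure, ?_⟩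
    exact Submodule.topologicalClosure_coe _
end

section
/- Let (B, μ) be a weighted Banach space with B having the Radon–Nikodým property, q ∈ (1,∞), and let π be a q-test plan. Define v_π(x) := (d(e_# π̂)/dμ)(x) · ∫ γ'(t) dπ̂_x(γ,t) for μ-a.e. x. Then v_π ∈ L^q(B, μ; B) and for every nonnegative Borel function h : B → [0,∞), ∫ h |v_π|_B dμ ≤ ∫∫_0^1 h(γ_t) ‖γ'(t)‖ dt dπ(γ). -/
/-!
Write `ν = e_# π̂` and `g(x) = ∫ γ'(t) dπ̂_x`, so that `v_π = (dν/dμ) g`. Compression gives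
`ν ≤ C μ`, hence `dν/dμ ≤ C`, and `(dν/dμ)^q ≤ C^(q-1) dν/dμ` turns `∫ |v_π|^q dμ` into at most
`C^(q-1) ∫ ‖g‖^q dν`. Jensen on each probability `π̂_x` bounds `‖g(x)‖^q` by the `π̂_x`-mean of
`‖γ'‖^q`, and integrating the means against `ν` gives back the kinetic energy under `π̂`.
The weighted inequality follows in the same way from `(dν/dμ) μ ≤ ν`,
`‖g(x)‖ ≤ ∫ ‖γ'‖ dπ̂_x` and `h(γ_t) = h(x)` for `π̂_x`-a.e. `(γ, t)`.
-/

open MeasureTheory TopologicalSpace Set ProbabilityTheory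
open scoped ENNReal NNReal

section Jensen

variable {α E : Type*} [MeasurableSpace α] [NormedAddCommGroup E] [NormedSpace ℝ E]

theorem enorm_integral_rpow_le_lintegral (m : Measure α) [IsProbabilityMeasure m] {f : α → E}
    (hf : AEStronglyMeasurable f m) {q : ℝ} (hq : 1 ≤ q) :
    ‖∫ a, f a ∂m‖ₑ ^ q ≤ ∫⁻ a, ‖f a‖ₑ ^ q ∂m := by
  have hq0 : 0 < q := one_pos.trans_le hq
  calc ‖∫ a, f a ∂m‖ₑ ^ q ≤ eLpNorm' f 1 m ^ q := by
        gcongr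
        simpa [eLpNorm'] using enorm_integral_le_lintegral_enorm f
    _ ≤ eLpNorm' f q m ^ q := by
        gcongr
        exact eLpNorm'_le_eLpNorm'_of_exponent_le one_pos hq m hf
    _ = ∫⁻ a, ‖f a‖ₑ ^ q ∂m := by
        rw [eLpNorm', ← ENNReal.rpow_mul, one_div_mul_cancel hq0.ne', ENNReal.rpow_one]

end Jensen

namespace MeasureTheory.Measure

variable {X : Type*} [MeasurableSpace X]

theorem rnDeriv_le_of_le_smul {ν μ : Measure X} [SigmaFinite μ] {c : ℝ≥0∞} (h : ν ≤ c • μ) :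
    ν.rnDeriv μ ≤ᵐ[μ] fun _ => c :=
  ae_le_of_forall_setLIntegral_le_of_sigmaFinite (ν.measurable_rnDeriv μ) fun s _ _ => by
    simpa [setLIntegral_const, mul_comm] using (setLIntegral_rnDeriv_le s).trans (h s)

theorem lintegral_rnDeriv_mul_le (ν μ : Measure X) {F : X → ℝ≥0∞} (hF : Measurable F) :
    ∫⁻ x, ν.rnDeriv μ x * F x ∂μ ≤ ∫⁻ x, F x ∂ν := by
  have h := lintegral_withDensity_eq_lintegral_mul μ (ν.measurable_rnDeriv μ) hF
  simp only [Pi.mul_apply] at h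
  rw [← h]
  exact lintegral_mono' (withDensity_rnDeriv_le ν μ) le_rfl

end MeasureTheory.Measure

section Density

variable {X E : Type*} [MeasurableSpace X] [NormedAddCommGroup E] [NormedSpace ℝ E]

theorem enorm_toReal_smul_le (d : ℝ≥0∞) (v : E) : ‖d.toReal • v‖ₑ ≤ d * ‖v‖ₑ := by
  rw [enorm_smul, Real.enorm_of_nonneg ENNReal.toReal_nonneg]
  exact mul_le_mul_left ENNReal.ofReal_toReal_le _

theorem lintegral_mul_enorm_rnDeriv_smul_le (ν μ : Measure X) {w : X → ℝ≥0∞} (hw : Measurable w)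
    {g : X → E} (hg : StronglyMeasurable g) :
    ∫⁻ x, w x * ‖(ν.rnDeriv μ x).toReal • g x‖ₑ ∂μ ≤ ∫⁻ x, w x * ‖g x‖ₑ ∂ν :=
  calc ∫⁻ x, w x * ‖(ν.rnDeriv μ x).toReal • g x‖ₑ ∂μ
      ≤ ∫⁻ x, ν.rnDeriv μ x * (w x * ‖g x‖ₑ) ∂μ := lintegral_mono fun x => by
        rw [mul_left_comm]
        gcongr
        exact enorm_toReal_smul_le _ _
    _ ≤ ∫⁻ x, w x * ‖g x‖ₑ ∂ν := ν.lintegral_rnDeriv_mul_le μ (hw.mul hg.enorm)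

theorem memLp_rnDeriv_smul {ν μ : Measure X} [SigmaFinite μ] {c : ℝ≥0∞} (hc : c ≠ ∞)
    (hνμ : ν ≤ c • μ) {g : X → E} (hg : StronglyMeasurable g) {q : ℝ} (hq : 1 ≤ q)
    (hgq : ∫⁻ x, ‖g x‖ₑ ^ q ∂ν < ∞) :
    MemLp (fun x => (ν.rnDeriv μ x).toReal • g x) (ENNReal.ofReal q) μ := by
  have hq0 : 0 < q := one_pos.trans_le hq
  have hq1 : 0 ≤ q - 1 := sub_nonneg.2 hq
  have hpt : ∀ᵐ x ∂μ, ‖(ν.rnDeriv μ x).toReal • g x‖ₑ ^ q ≤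
      c ^ (q - 1) * (ν.rnDeriv μ x * ‖g x‖ₑ ^ q) := by
    filter_upwards [Measure.rnDeriv_le_of_le_smul hνμ] with x hx
    calc ‖(ν.rnDeriv μ x).toReal • g x‖ₑ ^ q
        ≤ (ν.rnDeriv μ x * ‖g x‖ₑ) ^ q := by gcongr; exact enorm_toReal_smul_le _ _
      _ = ν.rnDeriv μ x ^ (q - 1) * (ν.rnDeriv μ x * ‖g x‖ₑ ^ q) := by
        have hsplit : ν.rnDeriv μ x ^ q = ν.rnDeriv μ x ^ (q - 1) * ν.rnDeriv μ x := by
          nth_rw 1 [← sub_add_cancel q 1]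
          rw [ENNReal.rpow_add_of_nonneg _ _ hq1 zero_le_one, ENNReal.rpow_one]
        rw [ENNReal.mul_rpow_of_nonneg _ _ hq0.le, hsplit, mul_assoc]
      _ ≤ c ^ (q - 1) * (ν.rnDeriv μ x * ‖g x‖ₑ ^ q) := by gcongr
  refine ⟨((ν.measurable_rnDeriv μ).ennreal_toReal.stronglyMeasurable.smul hg).aestronglyMeasurable,
    ?_⟩
  rw [eLpNorm_lt_top_iff_lintegral_rpow_enorm_lt_top (by simpa using hq0) ENNReal.ofReal_ne_top,
    ENNReal.toReal_ofReal hq0.le]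
  calc ∫⁻ x, ‖(ν.rnDeriv μ x).toReal • g x‖ₑ ^ q ∂μ
      ≤ ∫⁻ x, c ^ (q - 1) * (ν.rnDeriv μ x * ‖g x‖ₑ ^ q) ∂μ := lintegral_mono_ae hpt
    _ = c ^ (q - 1) * ∫⁻ x, ν.rnDeriv μ x * ‖g x‖ₑ ^ q ∂μ :=
      lintegral_const_mul _ ((ν.measurable_rnDeriv μ).mul (hg.enorm.pow_const q))
    _ ≤ c ^ (q - 1) * ∫⁻ x, ‖g x‖ₑ ^ q ∂ν :=
      mul_le_mul' le_rfl (ν.lintegral_rnDeriv_mul_le μ (hg.enorm.pow_const q))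
    _ < ∞ := ENNReal.mul_lt_top (ENNReal.rpow_lt_top_of_nonneg hq1 hc) hgq

end Density

section Disintegration

variable {X Γ E : Type*} [MeasurableSpace X] [MeasurableSpace Γ] [NormedAddCommGroup E]
  [NormedSpace ℝ E]

theorem lintegral_enorm_integral_rpow_le (K : Kernel X Γ) [IsMarkovKernel K] (ν : Measure X)
    {f : Γ → E} (hf : StronglyMeasurable f) {q : ℝ} (hq : 1 ≤ q) :
    ∫⁻ x, ‖∫ p, f p ∂K x‖ₑ ^ q ∂ν ≤ ∫⁻ p, ‖f p‖ₑ ^ q ∂(K ∘ₘ ν) := by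
  rw [Measure.lintegral_bind K.aemeasurable (hf.enorm.pow_const q).aemeasurable]
  exact lintegral_mono fun x => enorm_integral_rpow_le_lintegral (K x) hf.aestronglyMeasurable hq

theorem lintegral_mul_enorm_integral_le (K : Kernel X Γ) (ν : Measure X) {e : Γ → X}
    (he : Measurable e) (hK : ∀ᵐ x ∂ν, ∀ᵐ p ∂K x, e p = x) {w : X → ℝ≥0∞} (hw : Measurable w)
    {f : Γ → E} (hf : StronglyMeasurable f) :
    ∫⁻ x, w x * ‖∫ p, f p ∂K x‖ₑ ∂ν ≤ ∫⁻ p, w (e p) * ‖f p‖ₑ ∂(K ∘ₘ ν) := by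
  have hF : Measurable fun p => w (e p) * ‖f p‖ₑ := (hw.comp he).mul hf.enorm
  rw [Measure.lintegral_bind K.aemeasurable hF.aemeasurable]
  refine lintegral_mono_ae ?_
  filter_upwards [hK] with x hx
  calc w x * ‖∫ p, f p ∂K x‖ₑ ≤ w x * ∫⁻ p, ‖f p‖ₑ ∂K x := by
        gcongr; exact enorm_integral_le_lintegral_enorm f
    _ = ∫⁻ p, w x * ‖f p‖ₑ ∂K x := (lintegral_const_mul _ hf.enorm).symm
    _ = ∫⁻ p, w (e p) * ‖f p‖ₑ ∂K x := lintegral_congr_ae (hx.mono fun p hp => by simp only [hp])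

end Disintegration

theorem map_prod_le_smul_of_ae_le {Y T X : Type*} [MeasurableSpace Y] [MeasurableSpace T]
    [MeasurableSpace X] {π : Measure Y} [SFinite π] {τ : Measure T} [IsProbabilityMeasure τ]
    {e : Y × T → X} (he : Measurable e) {μ : Measure X} {c : ℝ≥0∞}
    (h : ∀ᵐ t ∂τ, π.map (fun y => e (y, t)) ≤ c • μ) :
    (π.prod τ).map e ≤ c • μ := by
  refine Measure.le_iff.2 fun s hs => ?_
  rw [Measure.map_apply he hs, Measure.prod_apply_symm (he hs)]
  calc ∫⁻ t, π ((fun y => (y, t)) ⁻¹' (e ⁻¹' s)) ∂τ ≤ ∫⁻ _, (c • μ) s ∂τ := by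
        refine lintegral_mono_ae (h.mono fun t ht => ?_)
        have hts := ht s
        rwa [Measure.map_apply (by fun_prop) hs] at hts
    _ = (c • μ) s := by simp

theorem vectorField_of_testPlan_general
    {B : Type*} [NormedAddCommGroup B] [NormedSpace ℝ B] [CompleteSpace B]
    [SeparableSpace B] [MeasurableSpace B] [BorelSpace B]
    (μ : Measure B) [IsFiniteMeasure μ]
    (q : ℝ) (hq : 1 < q)
    [MeasurableSpace C(ℝ, B)] [BorelSpace C(ℝ, B)]
    (π : Measure C(ℝ, B)) [IsProbabilityMeasure π]
    (Cc : ℝ)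
    -- compression: `(e_t)_# π ≤ C μ` for every `t ∈ [0,1]`
    (hcomp : ∀ t ∈ Icc (0:ℝ) 1,
      Measure.map (fun γ : C(ℝ, B) => γ t) π ≤ ENNReal.ofReal Cc • μ)
    -- finite kinetic `q`-energy
    (henergy : ∫⁻ pt, (‖deriv (fun r => pt.1 r) pt.2‖₊ : ℝ≥0∞) ^ q
        ∂(π.prod (volume.restrict (Icc (0:ℝ) 1))) < ⊤)
    -- disintegration `π̂ = ∫ π̂_x dν(x)` of `π̂` along `e`
    (κ : B → Measure (C(ℝ, B) × ℝ)) (hκprob : ∀ x, IsProbabilityMeasure (κ x))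
    (hκmeas : ∀ s : Set (C(ℝ, B) × ℝ), MeasurableSet s → Measurable fun x => κ x s)
    (hκconc : ∀ᵐ x ∂(Measure.map (fun pt : C(ℝ, B) × ℝ => pt.1 pt.2)
        (π.prod (volume.restrict (Icc (0:ℝ) 1)))), κ x {pt | pt.1 pt.2 ≠ x} = 0)
    (hκdis : ∀ s : Set (C(ℝ, B) × ℝ), MeasurableSet s →
      (π.prod (volume.restrict (Icc (0:ℝ) 1))) s =
        ∫⁻ x, κ x s ∂(Measure.map (fun pt : C(ℝ, B) × ℝ => pt.1 pt.2)
          (π.prod (volume.restrict (Icc (0:ℝ) 1))))) :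
    MemLp (fun x =>
        ((Measure.map (fun pt : C(ℝ, B) × ℝ => pt.1 pt.2)
            (π.prod (volume.restrict (Icc (0:ℝ) 1)))).rnDeriv μ x).toReal •
          ∫ pt, deriv (fun r => pt.1 r) pt.2 ∂(κ x)) (ENNReal.ofReal q) μ ∧
    ∀ h : B → ℝ, Measurable h → (∀ x, 0 ≤ h x) →
      ∫⁻ x, ENNReal.ofReal (h x *
          ‖((Measure.map (fun pt : C(ℝ, B) × ℝ => pt.1 pt.2)
              (π.prod (volume.restrict (Icc (0:ℝ) 1)))).rnDeriv μ x).toReal •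
            ∫ pt, deriv (fun r => pt.1 r) pt.2 ∂(κ x)‖) ∂μ ≤
        ∫⁻ pt, ENNReal.ofReal (h (pt.1 pt.2) * ‖deriv (fun r => pt.1 r) pt.2‖)
          ∂(π.prod (volume.restrict (Icc (0:ℝ) 1))) := by
  have : IsProbabilityMeasure (volume.restrict (Icc (0:ℝ) 1)) := ⟨by simp [Real.volume_Icc]⟩
  set ρ := π.prod (volume.restrict (Icc (0:ℝ) 1))
  set ν := ρ.map fun pt : C(ℝ, B) × ℝ => pt.1 pt.2
  let K : Kernel B (C(ℝ, B) × ℝ) := ⟨κ, Measure.measurable_of_measurable_coe _ hκmeas⟩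
  have : IsMarkovKernel K := ⟨hκprob⟩
  have he : Measurable fun pt : C(ℝ, B) × ℝ => pt.1 pt.2 := continuous_eval.measurable
  have hf : StronglyMeasurable fun pt : C(ℝ, B) × ℝ => deriv (fun r => pt.1 r) pt.2 :=
    stronglyMeasurable_deriv_with_param (f := fun γ : C(ℝ, B) => (γ : ℝ → B)) continuous_eval
  have hg : StronglyMeasurable fun x => ∫ pt, deriv (fun r => pt.1 r) pt.2 ∂K x :=
    hf.integral_kernel
  have hρ : ρ = K ∘ₘ ν := by
    ext s hs
    rw [Measure.bind_apply hs K.aemeasurable]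
    exact hκdis s hs
  have hνμ : ν ≤ ENNReal.ofReal Cc • μ :=
    map_prod_le_smul_of_ae_le he (ae_restrict_of_forall_mem measurableSet_Icc hcomp)
  refine ⟨memLp_rnDeriv_smul ENNReal.ofReal_ne_top hνμ hg hq.le
    ((lintegral_enorm_integral_rpow_le K ν hf hq.le).trans_lt (hρ ▸ henergy)), fun h hh h0 => ?_⟩
  simp only [ENNReal.ofReal_mul (h0 _), ofReal_norm]
  calc _ ≤ ∫⁻ x, ENNReal.ofReal (h x) * ‖∫ pt, deriv (fun r => pt.1 r) pt.2 ∂K x‖ₑ ∂ν :=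
        lintegral_mul_enorm_rnDeriv_smul_le ν μ hh.ennreal_ofReal hg
    _ ≤ _ := hρ ▸ lintegral_mul_enorm_integral_le K ν he
        (hκconc.mono fun x hx => ae_iff.2 hx) hh.ennreal_ofReal hf

/-- Let `(B, μ)` be a weighted Banach space with the Radon–Nikodým
property (encoded by the a.e. differentiability of the curves charged by the plan),
`q ∈ (1, ∞)` and `π` a `q`-test plan.  With `π̂ = π ⊗ L¹|_{[0,1]}`, `ν = e_# π̂` and
`{π̂_x}_x` a disintegration of `π̂` along the evaluation map `e(γ,t) = γ_t`, the vector
field `v_π(x) = (dν/dμ)(x) ∫ γ'(t) dπ̂_x(γ,t)` belongs to `L^q(B, μ; B)` and satisfies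
`∫ h |v_π| dμ ≤ ∫∫₀¹ h(γ_t) ‖γ'(t)‖ dt dπ(γ)` for every nonnegative Borel `h`. -/
theorem vectorField_of_testPlan
    {B : Type*} [NormedAddCommGroup B] [NormedSpace ℝ B] [CompleteSpace B]
    [SeparableSpace B] [MeasurableSpace B] [BorelSpace B]
    (μ : Measure B) [IsFiniteMeasure μ]
    (q : ℝ) (hq : 1 < q)
    [MeasurableSpace C(ℝ, B)] [BorelSpace C(ℝ, B)]
    (π : Measure C(ℝ, B)) [IsProbabilityMeasure π]
    (Cc : ℝ) (hCc : 0 < Cc)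
    -- compression: `(e_t)_# π ≤ C μ` for every `t ∈ [0,1]`
    (hcomp : ∀ t ∈ Icc (0:ℝ) 1,
      Measure.map (fun γ : C(ℝ, B) => γ t) π ≤ ENNReal.ofReal Cc • μ)
    -- `π` is concentrated on absolutely continuous curves, a.e. differentiable on `[0,1]`,
    -- whose metric speed is the norm of the derivative
    (hAC : ∀ᵐ γ ∂π,
      (∀ᵐ t ∂(volume.restrict (Icc (0:ℝ) 1)), DifferentiableAt ℝ (fun r => γ r) t) ∧
      IntegrableOn (fun r => ‖deriv (fun r => γ r) r‖) (Icc (0:ℝ) 1) ∧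
      ∀ s ∈ Icc (0:ℝ) 1, ∀ t ∈ Icc (0:ℝ) 1, s ≤ t →
        ‖γ t - γ s‖ ≤ ∫ r in s..t, ‖deriv (fun r => γ r) r‖)
    -- finite kinetic `q`-energy
    (henergy : ∫⁻ pt, (‖deriv (fun r => pt.1 r) pt.2‖₊ : ℝ≥0∞) ^ q
        ∂(π.prod (volume.restrict (Icc (0:ℝ) 1))) < ⊤)
    -- disintegration `π̂ = ∫ π̂_x dν(x)` of `π̂` along `e`
    (κ : B → Measure (C(ℝ, B) × ℝ)) (hκprob : ∀ x, IsProbabilityMeasure (κ x))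
    (hκmeas : ∀ s : Set (C(ℝ, B) × ℝ), MeasurableSet s → Measurable fun x => κ x s)
    (hκconc : ∀ᵐ x ∂(Measure.map (fun pt : C(ℝ, B) × ℝ => pt.1 pt.2)
        (π.prod (volume.restrict (Icc (0:ℝ) 1)))), κ x {pt | pt.1 pt.2 ≠ x} = 0)
    (hκdis : ∀ s : Set (C(ℝ, B) × ℝ), MeasurableSet s →
      (π.prod (volume.restrict (Icc (0:ℝ) 1))) s =
        ∫⁻ x, κ x s ∂(Measure.map (fun pt : C(ℝ, B) × ℝ => pt.1 pt.2)
          (π.prod (volume.restrict (Icc (0:ℝ) 1))))) :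
    MemLp (fun x =>
        ((Measure.map (fun pt : C(ℝ, B) × ℝ => pt.1 pt.2)
            (π.prod (volume.restrict (Icc (0:ℝ) 1)))).rnDeriv μ x).toReal •
          ∫ pt, deriv (fun r => pt.1 r) pt.2 ∂(κ x)) (ENNReal.ofReal q) μ ∧
    ∀ h : B → ℝ, Measurable h → (∀ x, 0 ≤ h x) →
      ∫⁻ x, ENNReal.ofReal (h x *
          ‖((Measure.map (fun pt : C(ℝ, B) × ℝ => pt.1 pt.2)
              (π.prod (volume.restrict (Icc (0:ℝ) 1)))).rnDeriv μ x).toReal •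
            ∫ pt, deriv (fun r => pt.1 r) pt.2 ∂(κ x)‖) ∂μ ≤
        ∫⁻ pt, ENNReal.ofReal (h (pt.1 pt.2) * ‖deriv (fun r => pt.1 r) pt.2‖)
          ∂(π.prod (volume.restrict (Icc (0:ℝ) 1))) :=
  vectorField_of_testPlan_general μ q hq π Cc hcomp henergy κ hκprob hκmeas hκconc hκdis
end

section
/- Divergence of the vector field induced by a test plan: with the hypotheses and notation of the previous statement, v_π belongs to D_q(div_μ) with div_μ(v_π) = d((e_0)_# π)/dμ − d((e_1)_# π)/dμ. That is, for every f ∈ C¹(B) ∩ Lip_b(B), ∫ ⟨d_x f, v_π(x)⟩ dμ(x) = ∫ (f(γ_1) − f(γ_0)) dπ(γ). -/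
/-!
Disintegrating `π̂` along `e` turns the left-hand side into `∫ ⟨d_{γ_t} f, γ'(t)⟩ dπ̂(γ, t)`:
the density `dν/dμ` is absorbed because compression gives `ν ≪ μ`, and `d_x f` passes through
the fibre integral because `π̂_x` lives on `{γ_t = x}` and the finite `q`-energy makes `γ'`
integrable. For `π`-a.e. `γ` the speed bound makes `γ`, hence the Lipschitz `f ∘ γ`, absolutely
continuous, and the fundamental theorem of calculus in `t` gives `f(γ_1) - f(γ_0)`.
-/

open MeasureTheory TopologicalSpace Set
open scoped ENNReal NNReal


/-- `f ∈ C¹(B) ∩ Lip_b(B)`, with (everywhere defined, continuous) Fréchet differential `df`. -/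
def IsC1LipBdd {B : Type*} [NormedAddCommGroup B] [NormedSpace ℝ B]
    (f : B → ℝ) (df : B → B →L[ℝ] ℝ) : Prop :=
  (∀ x, HasFDerivAt f (df x) x) ∧ Continuous df ∧
    (∃ K : NNReal, LipschitzWith K f) ∧ ∃ M : ℝ, ∀ x, |f x| ≤ M

open Filter Topology ProbabilityTheory

namespace AbsolutelyContinuousOnInterval

variable {X Y : Type*} [PseudoMetricSpace X] [PseudoMetricSpace Y] {a b : ℝ}

theorem of_dist_le_mul {f : ℝ → X} {g : ℝ → Y} {C : ℝ}
    (hg : AbsolutelyContinuousOnInterval g a b)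
    (hfg : ∀ s ∈ uIcc a b, ∀ t ∈ uIcc a b, dist (f s) (f t) ≤ C * dist (g s) (g t)) :
    AbsolutelyContinuousOnInterval f a b := by
  unfold AbsolutelyContinuousOnInterval at hg ⊢
  have hlim : Tendsto (fun E : ℕ × (ℕ → ℝ × ℝ) =>
      C * ∑ i ∈ Finset.range E.1, dist (g (E.2 i).1) (g (E.2 i).2))
      (totalLengthFilter ⊓ 𝓟 (disjWithin a b)) (𝓝 0) := by
    simpa using hg.const_mul C
  refine squeeze_zero' (Eventually.of_forall fun _ => Finset.sum_nonneg fun _ _ => dist_nonneg)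
    ?_ hlim
  filter_upwards [eventually_inf_principal.2 (Eventually.of_forall fun E hE => hE)] with E hE
  rw [Finset.mul_sum]
  exact Finset.sum_le_sum fun i hi => hfg _ (hE.1 i hi).1 _ (hE.1 i hi).2

theorem _root_.LipschitzWith.comp_absolutelyContinuousOnInterval {f : X → Y} {γ : ℝ → X}
    {K : ℝ≥0} (hf : LipschitzWith K f) (hγ : AbsolutelyContinuousOnInterval γ a b) :
    AbsolutelyContinuousOnInterval (f ∘ γ) a b :=
  hγ.of_dist_le_mul fun s _ t _ => hf.dist_le_mul (γ s) (γ t)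

theorem of_norm_sub_le_intervalIntegral {E : Type*} [NormedAddCommGroup E] {γ : ℝ → E}
    {v : ℝ → ℝ} (hab : a ≤ b) (hv : IntegrableOn v (Icc a b))
    (hγ : ∀ s ∈ Icc a b, ∀ t ∈ Icc a b, s ≤ t → ‖γ t - γ s‖ ≤ ∫ r in s..t, v r) :
    AbsolutelyContinuousOnInterval γ a b := by
  have hv' : IntervalIntegrable v volume a b :=
    (intervalIntegrable_iff_integrableOn_Icc_of_le hab).2 hv
  have key : ∀ s ∈ uIcc a b, ∀ t ∈ uIcc a b, s ≤ t →
      dist (γ t) (γ s) ≤ dist (∫ r in a..t, v r) (∫ r in a..s, v r) := by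
    intro s hs t ht hst
    rw [dist_eq_norm, dist_eq_norm, Real.norm_eq_abs, intervalIntegral.integral_interval_sub_left
      (hv'.mono_set (uIcc_subset_uIcc left_mem_uIcc ht))
      (hv'.mono_set (uIcc_subset_uIcc left_mem_uIcc hs))]
    rw [uIcc_of_le hab] at hs ht
    exact (hγ s hs t ht hst).trans (le_abs_self _)
  refine (hv'.absolutelyContinuousOnInterval_intervalIntegral left_mem_uIcc).of_dist_le_mul
    (C := 1) fun s hs t ht => ?_
  rw [one_mul]
  rcases le_total s t with hst | hts
  · rw [dist_comm, dist_comm (∫ r in a..s, v r)]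
    exact key s hs t ht hst
  · exact key t ht s hs hts

theorem integral_fderiv_apply_deriv_eq_sub {E : Type*} [NormedAddCommGroup E] [NormedSpace ℝ E]
    {f : E → ℝ} {df : E → E →L[ℝ] ℝ} {γ : ℝ → E}
    (hfγ : AbsolutelyContinuousOnInterval (f ∘ γ) a b) (hab : a ≤ b)
    (hdf : ∀ x, HasFDerivAt f (df x) x)
    (hγ : ∀ᵐ t ∂(volume.restrict (Icc a b)), DifferentiableAt ℝ γ t) :
    ∫ t in Icc a b, df (γ t) (deriv γ t) = f (γ b) - f (γ a) := by
  calc ∫ t in Icc a b, df (γ t) (deriv γ t) = ∫ t in Icc a b, deriv (f ∘ γ) t := by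
        refine integral_congr_ae ?_
        filter_upwards [hγ] with t ht
        exact ((hdf (γ t)).comp_hasDerivAt t ht.hasDerivAt).deriv.symm
    _ = ∫ t in a..b, deriv (f ∘ γ) t := by
        rw [intervalIntegral.integral_of_le hab, integral_Icc_eq_integral_Ioc]
    _ = f (γ b) - f (γ a) := hfγ.integral_deriv_eq_sub

end AbsolutelyContinuousOnInterval

namespace MeasureTheory

theorem Measure.map_prod_absolutelyContinuous {X T Z : Type*} [MeasurableSpace X]
    [MeasurableSpace T] [MeasurableSpace Z] {π : Measure X} [SFinite π] {ρ : Measure T}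
    [SFinite ρ] {μ : Measure Z} {e : X × T → Z} (he : Measurable e)
    (h : ∀ᵐ t ∂ρ, π.map (fun x => e (x, t)) ≪ μ) :
    (π.prod ρ).map e ≪ μ := by
  refine AbsolutelyContinuous.mk fun s hs hμs => ?_
  rw [Measure.map_apply he hs, Measure.prod_apply_symm (he hs), lintegral_eq_zero_iff' ?_]
  · filter_upwards [h] with t ht
    have := ht hμs
    rwa [Measure.map_apply (by fun_prop) hs] at this
  · exact (measurable_measure_prodMk_right (he hs)).aemeasurable

theorem integral_apply_integral_kernel_eq_integral_comp {α β E F : Type*} [MeasurableSpace α]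
    [MeasurableSpace β] [NormedAddCommGroup E] [NormedSpace ℝ E] [CompleteSpace E]
    [NormedAddCommGroup F] [NormedSpace ℝ F] [CompleteSpace F] {ν : Measure α} {k : Kernel α β}
    {e : β → α} (hk : ∀ᵐ x ∂ν, ∀ᵐ y ∂k x, e y = x) {L : α → E →L[ℝ] F} {V : β → E}
    (hV : Integrable V (k ∘ₘ ν)) (hLV : Integrable (fun y => L (e y) (V y)) (k ∘ₘ ν)) :
    ∫ x, L x (∫ y, V y ∂k x) ∂ν = ∫ y, L (e y) (V y) ∂(k ∘ₘ ν) := by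
  rw [Measure.comp_eq_comp_const_apply] at hLV ⊢
  rw [Kernel.integral_comp hLV]
  refine integral_congr_ae ?_
  filter_upwards [hk, Measure.ae_integrable_of_integrable_comp hV] with x hx hVx
  rw [← (L x).integral_comp_comm hVx]
  exact integral_congr_ae (by filter_upwards [hx] with y hy; rw [hy])

theorem Integrable.clm_apply_of_norm_le {α E F : Type*} [MeasurableSpace α]
    [NormedAddCommGroup E] [NormedSpace ℝ E] [NormedAddCommGroup F] [NormedSpace ℝ F]
    {μ : Measure α} {L : α → E →L[ℝ] F} {V : α → E} {K : ℝ} (hV : Integrable V μ)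
    (hL : AEStronglyMeasurable L μ) (hLK : ∀ x, ‖L x‖ ≤ K) :
    Integrable (fun x => L x (V x)) μ :=
  (hV.norm.const_mul K).mono'
    (isBoundedBilinearMap_apply.continuous.comp_aestronglyMeasurable (hL.prodMk hV.1))
    (Eventually.of_forall fun x =>
      ((L x).le_opNorm _).trans (mul_le_mul_of_nonneg_right (hLK x) (norm_nonneg _)))

theorem integrable_of_lintegral_nnnorm_rpow_lt_top {α E : Type*} [MeasurableSpace α]
    [NormedAddCommGroup E] {μ : Measure α} [IsFiniteMeasure μ] {f : α → E}
    (hf : AEStronglyMeasurable f μ) {q : ℝ} (hq : 1 ≤ q)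
    (h : ∫⁻ x, (‖f x‖₊ : ℝ≥0∞) ^ q ∂μ < ∞) : Integrable f μ := by
  refine MemLp.integrable (q := ENNReal.ofReal q) (ENNReal.one_le_ofReal.2 hq) ⟨hf, ?_⟩
  rw [eLpNorm_lt_top_iff_lintegral_rpow_enorm_lt_top (ENNReal.ofReal_pos.2 (by linarith)).ne'
    ENNReal.ofReal_ne_top, ENNReal.toReal_ofReal (by linarith)]
  exact h

end MeasureTheory

theorem divergence_of_vectorField_of_testPlan_general
    {B : Type*} [NormedAddCommGroup B] [NormedSpace ℝ B] [CompleteSpace B]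
    [SeparableSpace B] [MeasurableSpace B] [BorelSpace B]
    (μ : Measure B) [IsFiniteMeasure μ]
    (q : ℝ) (hq : 1 < q)
    [MeasurableSpace C(ℝ, B)] [BorelSpace C(ℝ, B)]
    (π : Measure C(ℝ, B)) [IsProbabilityMeasure π]
    (Cc : ℝ)
    -- compression: `(e_t)_# π ≤ C μ` for every `t ∈ [0,1]`
    (hcomp : ∀ t ∈ Icc (0:ℝ) 1,
      Measure.map (fun γ : C(ℝ, B) => γ t) π ≤ ENNReal.ofReal Cc • μ)
    -- `π` is concentrated on absolutely continuous curves, a.e. differentiable on `[0,1]`,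
    -- whose metric speed is the norm of the derivative
    (hAC : ∀ᵐ γ ∂π,
      (∀ᵐ t ∂(volume.restrict (Icc (0:ℝ) 1)), DifferentiableAt ℝ (fun r => γ r) t) ∧
      IntegrableOn (fun r => ‖deriv (fun r => γ r) r‖) (Icc (0:ℝ) 1) ∧
      ∀ s ∈ Icc (0:ℝ) 1, ∀ t ∈ Icc (0:ℝ) 1, s ≤ t →
        ‖γ t - γ s‖ ≤ ∫ r in s..t, ‖deriv (fun r => γ r) r‖)
    -- finite kinetic `q`-energy
    (henergy : ∫⁻ pt, (‖deriv (fun r => pt.1 r) pt.2‖₊ : ℝ≥0∞) ^ q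
        ∂(π.prod (volume.restrict (Icc (0:ℝ) 1))) < ⊤)
    -- disintegration `π̂ = ∫ π̂_x dν(x)` of `π̂` along `e`
    (κ : B → Measure (C(ℝ, B) × ℝ))
    (hκmeas : ∀ s : Set (C(ℝ, B) × ℝ), MeasurableSet s → Measurable fun x => κ x s)
    (hκconc : ∀ᵐ x ∂(Measure.map (fun pt : C(ℝ, B) × ℝ => pt.1 pt.2)
        (π.prod (volume.restrict (Icc (0:ℝ) 1)))), κ x {pt | pt.1 pt.2 ≠ x} = 0)
    (hκdis : ∀ s : Set (C(ℝ, B) × ℝ), MeasurableSet s →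
      (π.prod (volume.restrict (Icc (0:ℝ) 1))) s =
        ∫⁻ x, κ x s ∂(Measure.map (fun pt : C(ℝ, B) × ℝ => pt.1 pt.2)
          (π.prod (volume.restrict (Icc (0:ℝ) 1))))) :
    ∀ (f : B → ℝ) (df : B → B →L[ℝ] ℝ), IsC1LipBdd f df →
      ∫ x, df x (((Measure.map (fun pt : C(ℝ, B) × ℝ => pt.1 pt.2)
            (π.prod (volume.restrict (Icc (0:ℝ) 1)))).rnDeriv μ x).toReal •
          ∫ pt, deriv (fun r => pt.1 r) pt.2 ∂(κ x)) ∂μ =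
        ∫ γ, (f (γ 1) - f (γ 0)) ∂π := by
  rintro f df ⟨hdf, hdfc, ⟨K, hK⟩, -⟩
  have : IsProbabilityMeasure (volume.restrict (Icc (0:ℝ) 1)) := ⟨by simp⟩
  set P := π.prod (volume.restrict (Icc (0:ℝ) 1))
  set e : C(ℝ, B) × ℝ → B := fun pt => pt.1 pt.2
  set V : C(ℝ, B) × ℝ → B := fun pt => deriv (fun r => pt.1 r) pt.2
  set ν := P.map e
  have he : Continuous e := continuous_eval
  have hνμ : ν ≪ μ := Measure.map_prod_absolutelyContinuous he.measurable
    (ae_restrict_of_forall_mem measurableSet_Icc fun t ht =>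
      Measure.absolutelyContinuous_of_le_smul (hcomp t ht))
  let k : Kernel B (C(ℝ, B) × ℝ) := ⟨κ, Measure.measurable_of_measurable_coe κ hκmeas⟩
  have hPk : P = k ∘ₘ ν := Measure.ext fun s hs =>
    (hκdis s hs).trans (Measure.bind_apply hs k.aemeasurable).symm
  have hV : Integrable V P := integrable_of_lintegral_nnnorm_rpow_lt_top
    (stronglyMeasurable_deriv_with_param continuous_eval).aestronglyMeasurable hq.le henergy
  have hF : Integrable (fun z => df (e z) (V z)) P :=
    hV.clm_apply_of_norm_le (hdfc.comp he).aestronglyMeasurable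
      fun z => (hdf _).le_of_lipschitz hK
  calc _ = ∫ x, df x (∫ y, V y ∂k x) ∂ν := by
        simp_rw [map_smul]
        exact integral_rnDeriv_smul hνμ
    _ = ∫ z, df (e z) (V z) ∂P := by
        rw [hPk] at hV hF ⊢
        exact integral_apply_integral_kernel_eq_integral_comp
          (hκconc.mono fun x hx => ae_iff.2 hx) hV hF
    _ = ∫ γ, (∫ t in Icc (0:ℝ) 1, df (γ t) (deriv γ t)) ∂π := integral_prod _ hF
    _ = ∫ γ, (f (γ 1) - f (γ 0)) ∂π := by
        refine integral_congr_ae (hAC.mono fun γ ⟨hd, hv, hlen⟩ => ?_)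
        have hγ :=
          AbsolutelyContinuousOnInterval.of_norm_sub_le_intervalIntegral zero_le_one hv hlen
        exact (hK.comp_absolutelyContinuousOnInterval hγ).integral_fderiv_apply_deriv_eq_sub
          zero_le_one hdf hd

/-- Let `(B, μ)` be a weighted Banach space with the Radon–Nikodým
property (encoded by the a.e. differentiability of the curves charged by the plan),
`q ∈ (1, ∞)` and `π` a `q`-test plan.  With `π̂ = π ⊗ L¹|_{[0,1]}`, `ν = e_# π̂` and
`{π̂_x}_x` a disintegration of `π̂` along the evaluation map `e(γ,t) = γ_t`, the vector
field `v_π(x) = (dν/dμ)(x) ∫ γ'(t) dπ̂_x(γ,t)` belongs to `D_q(div_μ)` with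
`div_μ(v_π) = d((e_0)_# π)/dμ - d((e_1)_# π)/dμ`; that is, for every
`f ∈ C¹(B) ∩ Lip_b(B)` one has `∫ ⟨d_x f, v_π(x)⟩ dμ(x) = ∫ (f(γ_1) - f(γ_0)) dπ(γ)`. -/
theorem divergence_of_vectorField_of_testPlan
    {B : Type*} [NormedAddCommGroup B] [NormedSpace ℝ B] [CompleteSpace B]
    [SeparableSpace B] [MeasurableSpace B] [BorelSpace B]
    (μ : Measure B) [IsFiniteMeasure μ]
    (q : ℝ) (hq : 1 < q)
    [MeasurableSpace C(ℝ, B)] [BorelSpace C(ℝ, B)]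
    (π : Measure C(ℝ, B)) [IsProbabilityMeasure π]
    (Cc : ℝ) (hCc : 0 < Cc)
    -- compression: `(e_t)_# π ≤ C μ` for every `t ∈ [0,1]`
    (hcomp : ∀ t ∈ Icc (0:ℝ) 1,
      Measure.map (fun γ : C(ℝ, B) => γ t) π ≤ ENNReal.ofReal Cc • μ)
    -- `π` is concentrated on absolutely continuous curves, a.e. differentiable on `[0,1]`,
    -- whose metric speed is the norm of the derivative
    (hAC : ∀ᵐ γ ∂π,
      (∀ᵐ t ∂(volume.restrict (Icc (0:ℝ) 1)), DifferentiableAt ℝ (fun r => γ r) t) ∧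
      IntegrableOn (fun r => ‖deriv (fun r => γ r) r‖) (Icc (0:ℝ) 1) ∧
      ∀ s ∈ Icc (0:ℝ) 1, ∀ t ∈ Icc (0:ℝ) 1, s ≤ t →
        ‖γ t - γ s‖ ≤ ∫ r in s..t, ‖deriv (fun r => γ r) r‖)
    -- finite kinetic `q`-energy
    (henergy : ∫⁻ pt, (‖deriv (fun r => pt.1 r) pt.2‖₊ : ℝ≥0∞) ^ q
        ∂(π.prod (volume.restrict (Icc (0:ℝ) 1))) < ⊤)
    -- disintegration `π̂ = ∫ π̂_x dν(x)` of `π̂` along `e`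
    (κ : B → Measure (C(ℝ, B) × ℝ)) (hκprob : ∀ x, IsProbabilityMeasure (κ x))
    (hκmeas : ∀ s : Set (C(ℝ, B) × ℝ), MeasurableSet s → Measurable fun x => κ x s)
    (hκconc : ∀ᵐ x ∂(Measure.map (fun pt : C(ℝ, B) × ℝ => pt.1 pt.2)
        (π.prod (volume.restrict (Icc (0:ℝ) 1)))), κ x {pt | pt.1 pt.2 ≠ x} = 0)
    (hκdis : ∀ s : Set (C(ℝ, B) × ℝ), MeasurableSet s →
      (π.prod (volume.restrict (Icc (0:ℝ) 1))) s =
        ∫⁻ x, κ x s ∂(Measure.map (fun pt : C(ℝ, B) × ℝ => pt.1 pt.2)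
          (π.prod (volume.restrict (Icc (0:ℝ) 1))))) :
    ∀ (f : B → ℝ) (df : B → B →L[ℝ] ℝ), IsC1LipBdd f df →
      ∫ x, df x (((Measure.map (fun pt : C(ℝ, B) × ℝ => pt.1 pt.2)
            (π.prod (volume.restrict (Icc (0:ℝ) 1)))).rnDeriv μ x).toReal •
          ∫ pt, deriv (fun r => pt.1 r) pt.2 ∂(κ x)) ∂μ =
        ∫ γ, (f (γ 1) - f (γ 0)) ∂π :=
  divergence_of_vectorField_of_testPlan_general μ q hq π Cc hcomp hAC henergy κ hκmeas hκconc hκdis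
end
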